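/- Let A be a real n×n Metzler matrix (all off-diagonal entries nonnegative) and suppose there exists a vector z ∈ ℝⁿ with z_i > 0 for all i such that every entry of the row vector zᵀA is ≤ 0 (i.e., Σ_i z_i·A_{ij} ≤ 0 for every j). Then every complex eigenvalue of A has nonpositive real part. -/

import Mathlib

open Matrix

/-!
Taking norms in `A v = μ v` and using only the sign pattern of a Metzler matrix gives
`Re μ • |v| ≤ A |v|` componentwise. Pairing with the positive vector `z` then yields
`Re μ * (z ⬝ |v|) ≤ (zᵀ A) ⬝ |v| ≤ 0`, and `z ⬝ |v| > 0` because `v ≠ 0`.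
-/

namespace Matrix

variable {ι : Type*} [Fintype ι]

def IsMetzler (A : Matrix ι ι ℝ) : Prop :=
  ∀ i j, i ≠ j → 0 ≤ A i j

theorem dotProduct_pos_of_pos_of_nonneg {z w : ι → ℝ} (hz : ∀ i, 0 < z i) (hw : 0 ≤ w)
    (hw0 : w ≠ 0) : 0 < z ⬝ᵥ w := by
  obtain ⟨i, hi⟩ := Function.ne_iff.mp hw0
  exact Finset.sum_pos' (fun k _ => mul_nonneg (hz k).le (hw k))
    ⟨i, Finset.mem_univ i, mul_pos (hz i) (lt_of_le_of_ne (hw i) (Ne.symm hi))⟩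

theorem nonpos_of_smul_le_mulVec {A : Matrix ι ι ℝ} {z w : ι → ℝ} {r : ℝ}
    (hz : ∀ i, 0 < z i) (hzA : z ᵥ* A ≤ 0) (hw : 0 ≤ w) (hw0 : w ≠ 0)
    (h : r • w ≤ A *ᵥ w) : r ≤ 0 := by
  have hzw := dotProduct_pos_of_pos_of_nonneg hz hw hw0
  have : r * (z ⬝ᵥ w) ≤ 0 :=
    calc r * (z ⬝ᵥ w) = z ⬝ᵥ (r • w) := (dotProduct_smul r z w).symm
      _ ≤ z ⬝ᵥ (A *ᵥ w) := dotProduct_le_dotProduct_of_nonneg_left h fun i => (hz i).le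
      _ = (z ᵥ* A) ⬝ᵥ w := dotProduct_mulVec z A w
      _ ≤ 0 ⬝ᵥ w := dotProduct_le_dotProduct_of_nonneg_right hzA hw
      _ = 0 := zero_dotProduct w
  exact nonpos_of_mul_nonpos_left this hzw

theorem IsMetzler.re_smul_norm_le_mulVec_norm [DecidableEq ι] {A : Matrix ι ι ℝ}
    (hA : A.IsMetzler) {μ : ℂ} {v : ι → ℂ} (hv : A.map Complex.ofReal *ᵥ v = μ • v) :
    μ.re • (fun k => ‖v k‖) ≤ A *ᵥ fun k => ‖v k‖ := by
  intro i
  have hrow : (μ - A i i) * v i = ∑ k ∈ Finset.univ.erase i, (A i k : ℂ) * v k := by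
    have := congrFun hv i
    simp only [mulVec, dotProduct, map_apply, Pi.smul_apply, smul_eq_mul,
      ← Finset.add_sum_erase _ _ (Finset.mem_univ i)] at this
    linear_combination -this
  have hoff : ‖μ - A i i‖ * ‖v i‖ ≤ ∑ k ∈ Finset.univ.erase i, A i k * ‖v k‖ := by
    rw [← norm_mul, hrow]
    refine (norm_sum_le _ _).trans (Finset.sum_le_sum fun k hk => ?_)
    rw [norm_mul, Complex.norm_real, Real.norm_of_nonneg (hA i k (Finset.ne_of_mem_erase hk).symm)]
  have hre : (μ.re - A i i) * ‖v i‖ ≤ ‖μ - A i i‖ * ‖v i‖ := by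
    refine mul_le_mul_of_nonneg_right ?_ (norm_nonneg _)
    simpa using Complex.re_le_norm (μ - A i i)
  rw [Pi.smul_apply, smul_eq_mul, mulVec, dotProduct,
    ← Finset.add_sum_erase _ _ (Finset.mem_univ i)]
  linarith

end Matrix

/-- If `A` is a real `n×n` Metzler matrix (all off-diagonal entries nonnegative)
and there is a strictly positive vector `z` with `zᵀA ≤ 0` componentwise, then every complex
eigenvalue of `A` has nonpositive real part. -/
theorem metzler_diag_dominant_eigenvalues_nonpos {n : ℕ}
    (A : Matrix (Fin n) (Fin n) ℝ)
    (hMetzler : ∀ i j, i ≠ j → 0 ≤ A i j)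
    (z : Fin n → ℝ) (hz : ∀ i, 0 < z i)
    (hdd : ∀ j, ∑ i, z i * A i j ≤ 0) :
    ∀ μ : ℂ, (∃ v : Fin n → ℂ, v ≠ 0 ∧ (A.map Complex.ofReal) *ᵥ v = μ • v) → μ.re ≤ 0 := by
  rintro μ ⟨v, hv0, hv⟩
  refine nonpos_of_smul_le_mulVec hz hdd (w := fun k => ‖v k‖) (fun k => norm_nonneg _) ?_
    (IsMetzler.re_smul_norm_le_mulVec_norm hMetzler hv)
  simpa [funext_iff] using hv0
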